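/- arXiv:2512.04357 — 3 statements merged into one kernel-verified Lean document; each statement's English description precedes it below -/
import Mathlib

section
/- Let A be a closed symmetric linear relation in a Hilbert space H, let à be a selfadjoint extension of A in H (à = Ã*), and let z ∈ ρ(Ã), i.e., (à − z)⁻¹ is an everywhere defined bounded operator. Then A* = à ∔ N̂_z as a direct sum of subspaces of H × H, where N̂_z = {(f, z f) : f ∈ ker(A* − z)}. -/
noncomputable section

open scoped InnerProductSpace

/-- The adjoint of a linear relation `A` in a Hilbert space. -/
def adjRel {H : Type*} [NormedAddCommGroup H] [InnerProductSpace ℂ H]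
    (A : Submodule ℂ (H × H)) : Submodule ℂ (H × H) where
  carrier := {q | ∀ p ∈ A, ⟪p.1, q.2⟫_ℂ = ⟪p.2, q.1⟫_ℂ}
  add_mem' := by
    intro x y hx hy p hp
    simp only [Prod.fst_add, Prod.snd_add, inner_add_right, hx p hp, hy p hp]
  zero_mem' := by intro p hp; simp
  smul_mem' := by
    intro c x hx p hp
    simp only [Prod.smul_fst, Prod.smul_snd, inner_smul_right, hx p hp]

/-- The graph of multiplication by `z`, i.e. `{(f, z f) : f ∈ H}`. -/
def mulGraph {H : Type*} [AddCommGroup H] [Module ℂ H] (z : ℂ) :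
    Submodule ℂ (H × H) where
  carrier := {q | q.2 = z • q.1}
  add_mem' := by
    intro x y hx hy
    simp only [Set.mem_setOf_eq, Prod.fst_add, Prod.snd_add] at *
    rw [hx, hy, smul_add]
  zero_mem' := by simp
  smul_mem' := by
    intro c x hx
    simp only [Set.mem_setOf_eq, Prod.smul_fst, Prod.smul_snd] at *
    rw [hx, smul_comm]

/-- `N̂_z = {(f, z f) : f ∈ ker (A* − z)}`, the lifted defect subspace of `A` at `z`. -/
def defectHat {H : Type*} [NormedAddCommGroup H] [InnerProductSpace ℂ H]
    (A : Submodule ℂ (H × H)) (z : ℂ) : Submodule ℂ (H × H) :=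
  adjRel A ⊓ mulGraph z

/-- If `Ã` is a selfadjoint extension of the closed symmetric relation `A` and `z` is a
regular point of `Ã`, then `A* = Ã ∔ N̂_z` (direct sum decomposition). -/
theorem vonNeumann_type_decomposition
    {H : Type*} [NormedAddCommGroup H] [InnerProductSpace ℂ H] [CompleteSpace H]
    (A Atil : Submodule ℂ (H × H))
    (hclosed : IsClosed (A : Set (H × H)))
    (hsym : A ≤ adjRel A)
    (hext : A ≤ Atil)
    (hsa : Atil = adjRel Atil)
    (z : ℂ)
    (hker : ∀ q ∈ Atil, q.2 = z • q.1 → q.1 = 0)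
    (hran : ∀ g : H, ∃ q ∈ Atil, q.2 - z • q.1 = g) :
    Atil ⊓ defectHat A z = ⊥ ∧ Atil ⊔ defectHat A z = adjRel A := by
  have hAtil_le : Atil ≤ adjRel A := by
    rw [hsa]
    intro q hq p hp
    exact hq p (hext hp)
  constructor
  · rw [eq_bot_iff]
    rintro q ⟨hq1, hq2⟩
    have h1 : q.1 = 0 := hker q hq1 hq2.2
    have h2 : q.2 = 0 := by rw [hq2.2, h1, smul_zero]
    simp [Submodule.mem_bot]
    exact Prod.ext h1 h2
  · apply le_antisymm
    · exact sup_le hAtil_le inf_le_left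
    · intro q hq
      obtain ⟨p, hp, hpg⟩ := hran (q.2 - z • q.1)
      have hqp : q - p ∈ defectHat A z := by
        refine ⟨(adjRel A).sub_mem hq (hAtil_le hp), ?_⟩
        show (q - p).2 = z • (q - p).1
        simp only [Prod.fst_sub, Prod.snd_sub, smul_sub]
        rw [sub_eq_sub_iff_sub_eq_sub] at hpg
        simpa [neg_sub] using congrArg Neg.neg hpg
      have : q = p + (q - p) := by abel
      rw [this]
      exact Submodule.add_mem _ (Submodule.mem_sup_left hp) (Submodule.mem_sup_right hqp)
end
end

section
/- Every selfadjoint linear relation τ in ℂ^p admits a representation τ = ker[C D] = {(u, u') ∈ ℂ^p × ℂ^p : C u + D u' = 0} where C, D are p×p complex matrices satisfying C D* = D C* and rank [C D] = p. Conversely, for any matrices C, D ∈ ℂ^{p×p} with C D* = D C* and rank [C D] = p, the relation ker[C D] is selfadjoint in ℂ^p. -/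
/-!
Identify `ℂ^p × ℂ^p` with the Euclidean space `ℂ^(2p)`. Then `τ* = (J τ)ᗮ` for the unitary
`J (u, u') = (-u', u)`, so `dim τ* = 2p - dim τ`. Since `(ker [C D])ᗮ = range [C D]*`, one gets
`(ker [C D])* = {(D* x, -C* x)}`, which lies in `ker [C D]` exactly when `C D* = D C*`.
A selfadjoint `τ` thus has dimension `p`, hence is the kernel of a surjection `ℂ^(2p) → ℂ^p`, i.e.
of some `[C D]` of rank `p`. Conversely, if `rank [C D] = p` then `(ker [C D])*` and `ker [C D]`
both have dimension `p`, so the inclusion between them is an equality.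
-/

noncomputable section

/-- The adjoint of a linear relation `τ` in `ℂ^p` (with the standard inner product). -/
def adjSet {p : ℕ} (τ : Submodule ℂ ((Fin p → ℂ) × (Fin p → ℂ))) :
    Set ((Fin p → ℂ) × (Fin p → ℂ)) :=
  {u | ∀ v ∈ τ,
    (∑ k, (starRingEnd ℂ) (v.1 k) * u.2 k) = ∑ k, (starRingEnd ℂ) (v.2 k) * u.1 k}

/-- The relation `ker [C D] = {(u, u') : C u + D u' = 0}` in `ℂ^p`. -/
def kerRel {p : ℕ} (C D : Matrix (Fin p) (Fin p) ℂ) :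
    Submodule ℂ ((Fin p → ℂ) × (Fin p → ℂ)) :=
  LinearMap.ker
    ((C.mulVecLin.comp (LinearMap.fst ℂ (Fin p → ℂ) (Fin p → ℂ))) +
      (D.mulVecLin.comp (LinearMap.snd ℂ (Fin p → ℂ) (Fin p → ℂ))))

/-- The `p × 2p` block matrix `[C D]`. -/
def rowPair {p : ℕ} (C D : Matrix (Fin p) (Fin p) ℂ) :
    Matrix (Fin p) (Fin p ⊕ Fin p) ℂ :=
  Matrix.of fun i => Sum.elim (C i) (D i)

open Matrix Module

def prodRotate (R M : Type*) [Semiring R] [AddCommGroup M] [Module R M] : (M × M) ≃ₗ[R] M × M :=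
  (LinearEquiv.prodComm R M M).trans ((LinearEquiv.neg R).prodCongr (LinearEquiv.refl R M))

@[simp]
lemma prodRotate_apply {R M : Type*} [Semiring R] [AddCommGroup M] [Module R M] (u : M × M) :
    prodRotate R M u = (-u.2, u.1) := rfl

variable {p : ℕ}

def pairToEuclidean (p : ℕ) :
    ((Fin p → ℂ) × (Fin p → ℂ)) ≃ₗ[ℂ] EuclideanSpace ℂ (Fin p ⊕ Fin p) :=
  (LinearEquiv.sumArrowLequivProdArrow _ _ ℂ ℂ).symm.trans (WithLp.linearEquiv 2 ℂ _).symm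

@[simp]
lemma pairToEuclidean_apply (u : (Fin p → ℂ) × (Fin p → ℂ)) :
    pairToEuclidean p u = WithLp.toLp 2 (Sum.elim u.1 u.2) := rfl

lemma inner_pairToEuclidean_rotate (v u : (Fin p → ℂ) × (Fin p → ℂ)) :
    inner ℂ (pairToEuclidean p v) (pairToEuclidean p (prodRotate ℂ _ u)) =
      (∑ k, starRingEnd ℂ (v.2 k) * u.1 k) - ∑ k, starRingEnd ℂ (v.1 k) * u.2 k := by
  simp [PiLp.inner_apply, Fintype.sum_sum_type, mul_comm, sub_eq_neg_add]

def adjointRel (τ : Submodule ℂ ((Fin p → ℂ) × (Fin p → ℂ))) :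
    Submodule ℂ ((Fin p → ℂ) × (Fin p → ℂ)) :=
  ((τ.map (pairToEuclidean p).toLinearMap)ᗮ).comap
    ((prodRotate ℂ _).trans (pairToEuclidean p)).toLinearMap

lemma coe_adjointRel (τ : Submodule ℂ ((Fin p → ℂ) × (Fin p → ℂ))) :
    (adjointRel τ : Set _) = adjSet τ := by
  ext u
  simp only [adjointRel, SetLike.mem_coe, Submodule.mem_comap, Submodule.mem_orthogonal,
    Submodule.mem_map, forall_exists_index, and_imp, forall_apply_eq_imp_iff₂]
  refine forall₂_congr fun v _ => ?_
  rw [LinearEquiv.coe_coe, LinearEquiv.coe_coe, LinearEquiv.trans_apply,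
    inner_pairToEuclidean_rotate, sub_eq_zero, eq_comm]

lemma finrank_adjointRel_add (τ : Submodule ℂ ((Fin p → ℂ) × (Fin p → ℂ))) :
    finrank ℂ (adjointRel τ) + finrank ℂ τ = 2 * p := by
  rw [adjointRel, Submodule.comap_equiv_eq_map_symm, LinearEquiv.finrank_map_eq,
    ← LinearEquiv.finrank_map_eq (pairToEuclidean p) τ, add_comm,
    Submodule.finrank_add_finrank_orthogonal]
  simp [two_mul]

lemma kerRel_eq_comap (C D : Matrix (Fin p) (Fin p) ℂ) :
    kerRel C D =
      (LinearMap.ker (toEuclideanLin (rowPair C D))).comap (pairToEuclidean p).toLinearMap := by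
  ext u
  simp only [kerRel, LinearMap.mem_ker, Submodule.mem_comap, LinearEquiv.coe_coe,
    pairToEuclidean_apply, toLpLin_apply, WithLp.toLp_eq_zero]
  exact (fromCols_mulVec_sumElim C D u.1 u.2).symm ▸ Iff.rfl

lemma mem_adjointRel_kerRel_iff (C D : Matrix (Fin p) (Fin p) ℂ)
    (u : (Fin p → ℂ) × (Fin p → ℂ)) :
    u ∈ adjointRel (kerRel C D) ↔ ∃ x, (Dᴴ *ᵥ x, -(Cᴴ *ᵥ x)) = u := by
  rw [adjointRel, kerRel_eq_comap,
    Submodule.map_comap_eq_of_surjective (pairToEuclidean p).surjective, LinearMap.orthogonal_ker,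
    ← toEuclideanLin_conjTranspose_eq_adjoint, Submodule.mem_comap, LinearMap.mem_range, rowPair,
    ← fromCols, conjTranspose_fromCols_eq_fromRows_conjTranspose,
    (WithLp.toLp_surjective 2).exists]
  simp only [LinearEquiv.coe_coe, LinearEquiv.trans_apply, toLpLin_apply,
    fromRows_mulVec, prodRotate_apply, pairToEuclidean_apply, (WithLp.toLp_injective 2).eq_iff,
    Sum.elim_eq_iff, Prod.ext_iff, neg_eq_iff_eq_neg, and_comm]

lemma finrank_kerRel_add_rank (C D : Matrix (Fin p) (Fin p) ℂ) :
    finrank ℂ (kerRel C D) + (rowPair C D).rank = 2 * p := by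
  rw [kerRel_eq_comap, Submodule.comap_equiv_eq_map_symm, LinearEquiv.finrank_map_eq,
    rank_eq_finrank_range_toLin _ (EuclideanSpace.basisFun _ ℂ).toBasis
      (EuclideanSpace.basisFun _ ℂ).toBasis, ← toEuclideanLin_eq_toLin_orthonormal, add_comm,
    LinearMap.finrank_range_add_finrank_ker]
  simp [two_mul]

lemma kerRel_toMatrix' (M : (Fin p → ℂ) × (Fin p → ℂ) →ₗ[ℂ] Fin p → ℂ) :
    kerRel (LinearMap.toMatrix' (M ∘ₗ LinearMap.inl ℂ _ _))
      (LinearMap.toMatrix' (M ∘ₗ LinearMap.inr ℂ _ _)) = LinearMap.ker M := by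
  rw [kerRel, ← LinearMap.coprod, ← toLin'_apply', ← toLin'_apply', toLin'_toMatrix',
    toLin'_toMatrix', LinearMap.coprod_comp_inl_inr]

lemma exists_kerRel_eq (τ : Submodule ℂ ((Fin p → ℂ) × (Fin p → ℂ))) (hτ : finrank ℂ τ = p) :
    ∃ C D : Matrix (Fin p) (Fin p) ℂ, kerRel C D = τ := by
  have hquot : finrank ℂ (((Fin p → ℂ) × (Fin p → ℂ)) ⧸ τ) = finrank ℂ (Fin p → ℂ) := by
    have := τ.finrank_quotient_add_finrank
    rw [hτ, finrank_prod, finrank_fin_fun] at this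
    rw [finrank_fin_fun]
    omega
  let M := (LinearEquiv.ofFinrankEq _ _ hquot).toLinearMap ∘ₗ τ.mkQ
  refine ⟨_, _, (kerRel_toMatrix' M).trans ?_⟩
  rw [LinearEquiv.ker_comp, Submodule.ker_mkQ]

lemma conjTranspose_pair_mem_kerRel_iff (C D : Matrix (Fin p) (Fin p) ℂ) :
    (∀ x, (Dᴴ *ᵥ x, -(Cᴴ *ᵥ x)) ∈ kerRel C D) ↔ C * Dᴴ = D * Cᴴ := by
  simp only [kerRel, LinearMap.mem_ker, LinearMap.add_apply, LinearMap.comp_apply,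
    LinearMap.fst_apply, LinearMap.snd_apply, mulVecLin_apply, mulVec_neg, mulVec_mulVec,
    add_neg_eq_zero, ← ext_iff_mulVec]

/-- Every selfadjoint linear relation in `ℂ^p` is of the form `ker [C D]` with
`C D* = D C*` and `rank [C D] = p`; conversely every such `ker [C D]` is selfadjoint. -/
theorem selfadjoint_relation_kernel_representation (p : ℕ) :
    (∀ τ : Submodule ℂ ((Fin p → ℂ) × (Fin p → ℂ)),
      (τ : Set ((Fin p → ℂ) × (Fin p → ℂ))) = adjSet τ →
      ∃ C D : Matrix (Fin p) (Fin p) ℂ,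
        C * D.conjTranspose = D * C.conjTranspose ∧
        (rowPair C D).rank = p ∧
        τ = kerRel C D) ∧
    (∀ C D : Matrix (Fin p) (Fin p) ℂ,
      C * D.conjTranspose = D * C.conjTranspose →
      (rowPair C D).rank = p →
      ((kerRel C D : Set ((Fin p → ℂ) × (Fin p → ℂ))) = adjSet (kerRel C D))) := by
  refine ⟨fun τ hτ => ?_, fun C D hCD hrank => ?_⟩
  · have hadj : adjointRel τ = τ := SetLike.coe_injective ((coe_adjointRel τ).trans hτ.symm)
    have hdim : finrank ℂ τ = p := by
      have := finrank_adjointRel_add τ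
      rw [hadj] at this
      omega
    obtain ⟨C, D, rfl⟩ := exists_kerRel_eq τ hdim
    refine ⟨C, D, (conjTranspose_pair_mem_kerRel_iff C D).1 fun x => ?_, ?_, rfl⟩
    · exact hadj ▸ (mem_adjointRel_kerRel_iff C D _).2 ⟨x, rfl⟩
    · have := finrank_kerRel_add_rank C D
      omega
  · have hle : adjointRel (kerRel C D) ≤ kerRel C D := by
      intro u hu
      obtain ⟨x, rfl⟩ := (mem_adjointRel_kerRel_iff C D u).1 hu
      exact (conjTranspose_pair_mem_kerRel_iff C D).2 hCD x
    have hker := finrank_kerRel_add_rank C D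
    have hadj := finrank_adjointRel_add (kerRel C D)
    rw [← coe_adjointRel, Submodule.eq_of_le_of_finrank_eq hle (by omega)]
end
end

section
/- Let 𝔄(z) = [a_{ij}(z)]_{i,j=1,2} be a 2p×2p block matrix function on a domain Ω ⊂ ℂ₊ with a₁₂(z) invertible for all z ∈ Ω, and define W(z) = [[0, a₁₂(z)],[−I_p, a₂₂(z)]]⁻¹ · [[I_p, a₁₁(z)],[0, a₂₁(z)]]. Then the kernel K^W_ζ(z) = (J_p − W(z) J_p W(ζ)*)/(−i(z − ζ̄)) satisfies K^W_ζ(z) = B(z)⁻¹ N^𝔄_ζ(z) B(ζ)^{−*}, where N^𝔄_ζ(z) = (𝔄(z) − 𝔄(ζ)*)/(z − ζ̄) and B(z) = [[0, a₁₂(z)],[−I_p, a₂₂(z)]]. Consequently K^W is nonnegative on Ω if and only if N^𝔄 is. -/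
noncomputable section

open scoped ComplexOrder

/-- Nonnegativity of a matrix-valued kernel on a set `Ω ⊂ ℂ`. -/
def kernelNonneg {ι : Type*} [Fintype ι]
    (K : ℂ → ℂ → Matrix ι ι ℂ) (Ω : Set ℂ) : Prop :=
  ∀ (m : ℕ) (zs : Fin m → ℂ), (∀ i, zs i ∈ Ω) → ∀ u : Fin m → (ι → ℂ),
    0 ≤ ∑ i, ∑ j, ∑ k, ∑ l,
      (starRingEnd ℂ) (u i k) * (K (zs i) (zs j)) k l * (u j l)

open Matrix

lemma blockIdentity (p : ℕ) (A11 A12 A21 A22 B11 B12 B21 B22 : Matrix (Fin p) (Fin p) ℂ) :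
    (fromBlocks 0 A12 (-1) A22) *
      (fromBlocks 0 ((-Complex.I) • (1 : Matrix (Fin p) (Fin p) ℂ))
        (Complex.I • (1 : Matrix (Fin p) (Fin p) ℂ)) 0) *
      (fromBlocks 0 B12 (-1) B22)ᴴ
    - (fromBlocks 1 A11 0 A21) *
      (fromBlocks 0 ((-Complex.I) • (1 : Matrix (Fin p) (Fin p) ℂ))
        (Complex.I • (1 : Matrix (Fin p) (Fin p) ℂ)) 0) *
      (fromBlocks 1 B11 0 B21)ᴴ
    = (-Complex.I) • (fromBlocks A11 A12 A21 A22 - (fromBlocks B11 B12 B21 B22)ᴴ) := by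
  have hsub : ∀ (X11 X12 X21 X22 Y11 Y12 Y21 Y22 : Matrix (Fin p) (Fin p) ℂ),
      fromBlocks X11 X12 X21 X22 - fromBlocks Y11 Y12 Y21 Y22
      = fromBlocks (X11 - Y11) (X12 - Y12) (X21 - Y21) (X22 - Y22) := by
    intro _ _ _ _ _ _ _ _
    simp [sub_eq_add_neg, fromBlocks_neg, fromBlocks_add]
  simp only [fromBlocks_multiply, fromBlocks_conjTranspose, fromBlocks_smul, hsub]
  apply fromBlocks_inj.2
  refine ⟨?_, ?_, ?_, ?_⟩ <;>
    simp [Matrix.mul_smul, Matrix.smul_mul, smul_sub, smul_smul] <;> abel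

lemma Bunit (p : ℕ) (A12 A22 : Matrix (Fin p) (Fin p) ℂ) (h : IsUnit A12) :
    IsUnit (fromBlocks 0 A12 (-1) A22 : Matrix (Fin p ⊕ Fin p) (Fin p ⊕ Fin p) ℂ) := by
  have hd : IsUnit A12.det := (isUnit_iff_isUnit_det A12).1 h
  have h1 : A12 * A12⁻¹ = 1 := mul_nonsing_inv _ hd
  have h2 : A12⁻¹ * A12 = 1 := nonsing_inv_mul _ hd
  have e1 : fromBlocks 0 A12 (-1) A22 * fromBlocks (A22 * A12⁻¹) (-1) A12⁻¹ 0
      = (1 : Matrix (Fin p ⊕ Fin p) (Fin p ⊕ Fin p) ℂ) := by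
    simp [fromBlocks_multiply, h1, Matrix.mul_assoc, ← fromBlocks_one]
  have e2 : fromBlocks (A22 * A12⁻¹) (-1) A12⁻¹ 0 * fromBlocks 0 A12 (-1) A22
      = (1 : Matrix (Fin p ⊕ Fin p) (Fin p ⊕ Fin p) ℂ) := by
    simp [fromBlocks_multiply, Matrix.mul_assoc, h2, ← fromBlocks_one]
  exact ⟨⟨_, _, e1, e2⟩, rfl⟩

lemma quadSum {n : Type*} [Fintype n] (M : Matrix n n ℂ) (u v : n → ℂ) :
    ∑ k, ∑ l, (starRingEnd ℂ) (u k) * M k l * v l = star u ⬝ᵥ (M *ᵥ v) := by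
  simp [dotProduct, mulVec, Finset.mul_sum, mul_assoc]

lemma dot_congr {n : Type*} [Fintype n] (A N C : Matrix n n ℂ) (x y : n → ℂ) :
    star x ⬝ᵥ ((A * N * C) *ᵥ y) = star (Aᴴ *ᵥ x) ⬝ᵥ (N *ᵥ (C *ᵥ y)) := by
  rw [star_mulVec, conjTranspose_conjTranspose, ← mulVec_mulVec, ← mulVec_mulVec,
    dotProduct_mulVec]

/-- The kernel `K^W_ζ(z) = (J − W(z) J W(ζ)*)/(−i(z−ζ̄))` of the resolvent matrix
`W(z) = [[0, a₁₂],[−I, a₂₂]]⁻¹ [[I, a₁₁],[0, a₂₁]]` is congruent (via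
`B(z) = [[0, a₁₂],[−I, a₂₂]]`) to the Nevanlinna kernel `N^𝔄_ζ(z)` of the
preresolvent matrix `𝔄(z)`; hence one is nonnegative iff the other is. -/
theorem resolvent_matrix_kernel_congruence (p : ℕ) (Ω : Set ℂ)
    (hΩ : Ω ⊆ {z : ℂ | 0 < z.im})
    (a11 a12 a21 a22 : ℂ → Matrix (Fin p) (Fin p) ℂ)
    (hinv : ∀ z ∈ Ω, IsUnit (a12 z)) :
    let J : Matrix (Fin p ⊕ Fin p) (Fin p ⊕ Fin p) ℂ :=
      Matrix.fromBlocks 0 ((-Complex.I) • (1 : Matrix (Fin p) (Fin p) ℂ))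
        (Complex.I • (1 : Matrix (Fin p) (Fin p) ℂ)) 0
    let B : ℂ → Matrix (Fin p ⊕ Fin p) (Fin p ⊕ Fin p) ℂ := fun z =>
      Matrix.fromBlocks 0 (a12 z) (-1) (a22 z)
    let W : ℂ → Matrix (Fin p ⊕ Fin p) (Fin p ⊕ Fin p) ℂ := fun z =>
      (B z)⁻¹ * Matrix.fromBlocks 1 (a11 z) 0 (a21 z)
    let Afrak : ℂ → Matrix (Fin p ⊕ Fin p) (Fin p ⊕ Fin p) ℂ := fun z =>
      Matrix.fromBlocks (a11 z) (a12 z) (a21 z) (a22 z)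
    let KW : ℂ → ℂ → Matrix (Fin p ⊕ Fin p) (Fin p ⊕ Fin p) ℂ := fun z ζ =>
      (-(Complex.I) * (z - (starRingEnd ℂ) ζ))⁻¹ •
        (J - W z * J * (W ζ).conjTranspose)
    let NA : ℂ → ℂ → Matrix (Fin p ⊕ Fin p) (Fin p ⊕ Fin p) ℂ := fun z ζ =>
      (z - (starRingEnd ℂ) ζ)⁻¹ • (Afrak z - (Afrak ζ).conjTranspose)
    (∀ z ∈ Ω, ∀ ζ ∈ Ω,
      KW z ζ = (B z)⁻¹ * NA z ζ * ((B ζ).conjTranspose)⁻¹) ∧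
    (kernelNonneg KW Ω ↔ kernelNonneg NA Ω) := by
  intro J B W Afrak KW NA
  set C : ℂ → Matrix (Fin p ⊕ Fin p) (Fin p ⊕ Fin p) ℂ := fun z =>
    Matrix.fromBlocks 1 (a11 z) 0 (a21 z) with hC
  have hBu : ∀ z ∈ Ω, IsUnit (B z) := fun z hz => Bunit p _ _ (hinv z hz)
  have hBd : ∀ z ∈ Ω, IsUnit (B z).det := fun z hz => (isUnit_iff_isUnit_det _).1 (hBu z hz)
  have hBHinv : ∀ z, ((B z)⁻¹)ᴴ = ((B z)ᴴ)⁻¹ := fun z => conjTranspose_nonsing_inv _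
  have hBH1 : ∀ z ∈ Ω, (B z)ᴴ * ((B z)ᴴ)⁻¹ = 1 := by
    intro z hz
    rw [← hBHinv, ← conjTranspose_mul, nonsing_inv_mul _ (hBd z hz), conjTranspose_one]
  have hBH2 : ∀ z ∈ Ω, ((B z)ᴴ)⁻¹ * (B z)ᴴ = 1 := by
    intro z hz
    rw [← hBHinv, ← conjTranspose_mul, mul_nonsing_inv _ (hBd z hz), conjTranspose_one]
  have hcong : ∀ z ∈ Ω, ∀ ζ ∈ Ω,
      KW z ζ = (B z)⁻¹ * NA z ζ * ((B ζ)ᴴ)⁻¹ := by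
    intro z hz ζ hζ
    have hmid : B z * (J - W z * J * (W ζ)ᴴ) * (B ζ)ᴴ
        = (-Complex.I) • (Afrak z - (Afrak ζ)ᴴ) := by
      have hBW : B z * W z = C z := by
        show B z * ((B z)⁻¹ * C z) = C z
        rw [← Matrix.mul_assoc, mul_nonsing_inv _ (hBd z hz), Matrix.one_mul]
      have hWB : (W ζ)ᴴ * (B ζ)ᴴ = (C ζ)ᴴ := by
        have : B ζ * W ζ = C ζ := by
          show B ζ * ((B ζ)⁻¹ * C ζ) = C ζ
          rw [← Matrix.mul_assoc, mul_nonsing_inv _ (hBd ζ hζ), Matrix.one_mul]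
        rw [← conjTranspose_mul, this]
      have expand : B z * (J - W z * J * (W ζ)ᴴ) * (B ζ)ᴴ
          = B z * J * (B ζ)ᴴ - C z * J * (C ζ)ᴴ := by
        rw [Matrix.mul_sub, Matrix.sub_mul]
        congr 1
        simp only [Matrix.mul_assoc]
        rw [hWB, ← Matrix.mul_assoc (B z), hBW]
      rw [expand]
      exact blockIdentity p (a11 z) (a12 z) (a21 z) (a22 z)
        (a11 ζ) (a12 ζ) (a21 ζ) (a22 ζ)
    have hX : J - W z * J * (W ζ)ᴴ
        = (B z)⁻¹ * ((-Complex.I) • (Afrak z - (Afrak ζ)ᴴ)) * ((B ζ)ᴴ)⁻¹ := by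
      rw [← hmid]
      calc J - W z * J * (W ζ)ᴴ
          = ((B z)⁻¹ * B z) * (J - W z * J * (W ζ)ᴴ) * ((B ζ)ᴴ * ((B ζ)ᴴ)⁻¹) := by
            rw [nonsing_inv_mul _ (hBd z hz), hBH1 ζ hζ, Matrix.one_mul, Matrix.mul_one]
        _ = (B z)⁻¹ * (B z * (J - W z * J * (W ζ)ᴴ) * (B ζ)ᴴ) * ((B ζ)ᴴ)⁻¹ := by
            simp only [Matrix.mul_assoc]
    have hc : (-(Complex.I) * (z - (starRingEnd ℂ) ζ))⁻¹ * (-Complex.I)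
        = (z - (starRingEnd ℂ) ζ)⁻¹ := by
      rw [_root_.mul_inv_rev, mul_assoc, inv_mul_cancel₀ (neg_ne_zero.2 Complex.I_ne_zero), mul_one]
    show (-(Complex.I) * (z - (starRingEnd ℂ) ζ))⁻¹ • (J - W z * J * (W ζ)ᴴ)
        = (B z)⁻¹ * NA z ζ * ((B ζ)ᴴ)⁻¹
    rw [hX, mul_smul_comm, smul_mul_assoc, smul_smul, hc]
    show (z - (starRingEnd ℂ) ζ)⁻¹ • ((B z)⁻¹ * (Afrak z - (Afrak ζ)ᴴ) * ((B ζ)ᴴ)⁻¹)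
        = (B z)⁻¹ * ((z - (starRingEnd ℂ) ζ)⁻¹ • (Afrak z - (Afrak ζ)ᴴ)) * ((B ζ)ᴴ)⁻¹
    rw [mul_smul_comm, smul_mul_assoc]
  refine ⟨hcong, ?_⟩
  have hstep : ∀ z ∈ Ω, ∀ ζ ∈ Ω, ∀ x y : Fin p ⊕ Fin p → ℂ,
      star x ⬝ᵥ (KW z ζ *ᵥ y)
      = star (((B z)ᴴ)⁻¹ *ᵥ x) ⬝ᵥ (NA z ζ *ᵥ (((B ζ)ᴴ)⁻¹ *ᵥ y)) := by
    intro z hz ζ hζ x y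
    rw [hcong z hz ζ hζ, dot_congr, hBHinv]
  have hcancel : ∀ z ∈ Ω, ∀ x : Fin p ⊕ Fin p → ℂ,
      ((B z)ᴴ)⁻¹ *ᵥ ((B z)ᴴ *ᵥ x) = x := by
    intro z hz x
    rw [mulVec_mulVec, hBH2 z hz, one_mulVec]
  constructor
  · intro h m zs hzs u
    have key := h m zs hzs (fun j => (B (zs j))ᴴ *ᵥ u j)
    simp only [quadSum] at key ⊢
    refine le_of_le_of_eq key ?_
    refine Finset.sum_congr rfl fun i _ => Finset.sum_congr rfl fun j _ => ?_
    rw [hstep _ (hzs i) _ (hzs j), hcancel _ (hzs i), hcancel _ (hzs j)]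
  · intro h m zs hzs u
    have key := h m zs hzs (fun j => ((B (zs j))ᴴ)⁻¹ *ᵥ u j)
    simp only [quadSum] at key ⊢
    refine le_of_le_of_eq key ?_
    refine Finset.sum_congr rfl fun i _ => Finset.sum_congr rfl fun j _ => ?_
    rw [hstep _ (hzs i) _ (hzs j)]
end
end
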